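/- arXiv:2407.01125 — 2 statements merged into one kernel-verified Lean document; each statement's English description precedes it below -/
import Mathlib

section
/- Let X be a real Hilbert space (or reflexive Banach space) and T : X → X* a map that is bounded (maps bounded sets to bounded sets), continuous, strictly monotone (⟨T(x)−T(y), x−y⟩ > 0 for x ≠ y), and coercive (⟨T(x), x⟩/‖x‖ → ∞ as ‖x‖ → ∞). Then for every f ∈ X* there is a unique x ∈ X with T(x) = f. In particular, applied to the nonlinear form A((u,v),(φ,χ)) := ⟨v,φ⟩ − ⟨u,χ⟩ + kλ_r⟨v,χ⟩ + kλ_e⟨∇v,∇χ⟩ − kγ⟨w×v,χ⟩ + ⟨∇u,∇φ⟩ + κ⟨|u|²u,φ⟩ + β⟨e(e·u),φ⟩ on X = V_h × V_h, the semi-implicit Euler step has a unique solution for any k > 0. -/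
/-!
Through the Riesz isomorphism `T` becomes a continuous, monotone, coercive map `F : X → X`;
uniqueness is immediate from strict monotonicity. For existence, the regularized maps
`(n + 1) • F + id` are strongly monotone; their solutions of `F xₙ + xₙ / (n + 1) = y` are
bounded by coercivity, and a weak cluster point (Banach–Alaoglu, along an ultrafilter) solves
`F x = y` by Minty's trick, which needs only monotonicity and continuity of `F`.

A continuous strongly monotone map is surjective by the same limit argument applied to its
Galerkin solutions on the spans of finite sets. In finite dimension this is proved by induction
on the dimension, without Brouwer's theorem: solving on the hyperplane `eᗮ` with offset `t • e`
leaves a residual `φ t • e`, where `φ` is continuous (the solutions depend continuously on `t`)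
and `φ t - t` is nondecreasing by strong monotonicity, so `φ` vanishes somewhere.
-/

open Filter Topology InnerProductSpace
open scoped RealInnerProductSpace

section

variable {E : Type*} [NormedAddCommGroup E] [InnerProductSpace ℝ E]

def IsMonotoneOperator (F : E → E) : Prop :=
  ∀ a b, 0 ≤ ⟪F a - F b, a - b⟫_ℝ

def IsStronglyMonotoneOperator (F : E → E) : Prop :=
  ∀ a b, ‖a - b‖ ^ 2 ≤ ⟪F a - F b, a - b⟫_ℝ

def IsCoerciveOperator (F : E → E) : Prop :=
  ∀ M : ℝ, ∃ R : ℝ, ∀ x : E, R ≤ ‖x‖ → M ≤ ⟪F x, x⟫_ℝ / ‖x‖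

theorem IsStronglyMonotoneOperator.isMonotoneOperator {F : E → E}
    (hF : IsStronglyMonotoneOperator F) : IsMonotoneOperator F :=
  fun a b => (sq_nonneg _).trans (hF a b)

theorem exists_eq_zero_of_forall_add_sub_le {φ : ℝ → ℝ} (hφ : Continuous φ)
    (h : ∀ s t, s ≤ t → φ s + (t - s) ≤ φ t) : ∃ t, φ t = 0 := by
  have hb : -|φ 0| ≤ |φ 0| := neg_le_self (abs_nonneg _)
  have hlow : φ (-|φ 0|) ≤ 0 := by
    have := h (-|φ 0|) 0 (by linarith [abs_nonneg (φ 0)])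
    linarith [le_abs_self (φ 0)]
  have hhigh : 0 ≤ φ |φ 0| := by
    have := h 0 |φ 0| (abs_nonneg _)
    linarith [neg_abs_le (φ 0)]
  obtain ⟨t, -, ht⟩ := intermediate_value_Icc hb hφ.continuousOn ⟨hlow, hhigh⟩
  exact ⟨t, ht⟩

theorem eq_of_forall_inner_sub_nonneg {F : E → E} (hF : Continuous F) {x y : E}
    (h : ∀ w, 0 ≤ ⟪y - F w, x - w⟫_ℝ) : F x = y := by
  have hdir : ∀ z, ⟪y - F x, z⟫_ℝ ≤ 0 := by
    intro z
    have hlim : Tendsto (fun t : ℝ => ⟪y - F (x + t • z), z⟫_ℝ) (𝓝[>] 0)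
        (𝓝 ⟪y - F x, z⟫_ℝ) := by
      have hc : Continuous fun t : ℝ => ⟪y - F (x + t • z), z⟫_ℝ := by fun_prop
      simpa using hc.continuousWithinAt (s := Set.Ioi 0) (x := 0) |>.tendsto
    refine le_of_tendsto hlim ?_
    filter_upwards [self_mem_nhdsWithin] with t (ht : 0 < t)
    have := h (x + t • z)
    rw [sub_add_cancel_left, inner_neg_right, real_inner_smul_right] at this
    nlinarith
  simpa [sub_eq_zero, eq_comm] using real_inner_self_nonpos.mp (hdir (y - F x))

theorem IsMonotoneOperator.eq_of_tendsto {F : E → E} (hFm : IsMonotoneOperator F)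
    (hFc : Continuous F) {ι : Type*} {l : Filter ι} [l.NeBot] {u : ι → E} {x y : E}
    (hu : ∀ z, Tendsto (fun i => ⟪u i, z⟫_ℝ) l (𝓝 ⟪x, z⟫_ℝ))
    (hFu : ∀ z, Tendsto (fun i => ⟪F (u i), z⟫_ℝ) l (𝓝 ⟪y, z⟫_ℝ))
    (hFuu : Tendsto (fun i => ⟪F (u i), u i⟫_ℝ) l (𝓝 ⟪y, x⟫_ℝ)) : F x = y := by
  refine eq_of_forall_inner_sub_nonneg hFc fun w =>
    ge_of_tendsto (x := l) ?_ (Eventually.of_forall fun i => hFm (u i) w)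
  have expand : ∀ a b, ⟪a - F w, b - w⟫_ℝ = ⟪a, b⟫_ℝ - ⟪a, w⟫_ℝ - ⟪b, F w⟫_ℝ + ⟪F w, w⟫_ℝ := by
    intro a b
    simp only [inner_sub_left, inner_sub_right, real_inner_comm b]
    ring
  simp only [expand]
  exact ((hFuu.sub (hFu w)).sub (hu (F w))).add tendsto_const_nhds

theorem exists_tendsto_inner_of_norm_le [CompleteSpace E] {ι : Type*} (U : Ultrafilter ι)
    {u : ι → E} {C : ℝ} (hC : ∀ i, ‖u i‖ ≤ C) :
    ∃ x, ∀ z, Tendsto (fun i => ⟪u i, z⟫_ℝ) U (𝓝 ⟪x, z⟫_ℝ) := by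
  let v : ι → WeakDual ℝ E := fun i => StrongDual.toWeakDual (toDual ℝ E (u i))
  have hv : ∀ i, v i ∈ WeakDual.toStrongDual ⁻¹' Metric.closedBall 0 C := by
    simpa [v] using hC
  obtain ⟨φ, -, hφ⟩ := (WeakDual.isCompact_closedBall 0 C).ultrafilter_le_nhds (U.map v)
    (le_principal_iff.mpr (mem_map.mpr (univ_mem' hv)))
  refine ⟨(toDual ℝ E).symm (WeakDual.toStrongDual φ), fun z => ?_⟩
  rw [toDual_symm_apply]
  exact tendsto_iff_forall_eval_tendsto_topDualPairing.mp hφ z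

namespace IsStronglyMonotoneOperator

variable {G : E → E}

theorem orthogonalProjection_comp (hG : IsStronglyMonotoneOperator G) (K : Submodule ℝ E)
    [K.HasOrthogonalProjection] (v : E) :
    IsStronglyMonotoneOperator fun a : K => K.orthogonalProjectionOnto (G (a + v)) := by
  intro a b
  have h := hG (a + v) (b + v)
  rw [add_sub_add_right_eq_sub] at h
  dsimp only
  rwa [← map_sub, Submodule.inner_orthogonalProjectionOnto_eq_of_mem_right, Submodule.coe_sub,
    ← Submodule.norm_coe, Submodule.coe_sub]

theorem exists_sub_mem_orthogonal (hG : IsStronglyMonotoneOperator G) (hGc : Continuous G)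
    (K : Submodule ℝ E) [K.HasOrthogonalProjection]
    (hK : ∀ H : K → K, Continuous H → IsStronglyMonotoneOperator H → Function.Surjective H)
    (v y : E) : ∃ a : K, G (a + v) - y ∈ Kᗮ := by
  obtain ⟨a, ha⟩ := hK _ (by fun_prop) (hG.orthogonalProjection_comp K v)
    (K.orthogonalProjectionOnto y)
  refine ⟨a, ?_⟩
  rwa [← Submodule.orthogonalProjectionOnto_eq_zero_iff, map_sub, sub_eq_zero]

theorem norm_sub_le_of_sub_mem_orthogonal (hG : IsStronglyMonotoneOperator G)
    {K : Submodule ℝ E} {a b u v y : E} (hab : a - b ∈ K) (ha : G (a + u) - y ∈ Kᗮ)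
    (hb : G (b + v) - y ∈ Kᗮ) : ‖a - b‖ ≤ ‖G (b + v) - G (b + u)‖ := by
  have h := hG (a + u) (b + u)
  rw [add_sub_add_right_eq_sub,
    show G (a + u) - G (b + u) = (G (a + u) - y) - (G (b + v) - y) + (G (b + v) - G (b + u))
      by abel,
    inner_add_left, inner_sub_left, Submodule.inner_left_of_mem_orthogonal hab ha,
    Submodule.inner_left_of_mem_orthogonal hab hb, sub_zero, zero_add] at h
  nlinarith [real_inner_le_norm (G (b + v) - G (b + u)) (a - b), norm_nonneg (a - b),
    norm_nonneg (G (b + v) - G (b + u))]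

theorem continuous_of_sub_mem_orthogonal (hG : IsStronglyMonotoneOperator G)
    (hGc : Continuous G) {T : Type*} [TopologicalSpace T] {K : Submodule ℝ E} {x v : T → E}
    {y : E} (hv : Continuous v) (hxK : ∀ t, x t ∈ K) (hx : ∀ t, G (x t + v t) - y ∈ Kᗮ) :
    Continuous x := by
  refine continuous_iff_continuousAt.mpr fun s => tendsto_iff_norm_sub_tendsto_zero.mpr ?_
  have hlim : Tendsto (fun t => ‖G (x s + v s) - G (x s + v t)‖) (𝓝 s) (𝓝 0) := by
    have : Continuous fun t => ‖G (x s + v s) - G (x s + v t)‖ := by fun_prop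
    simpa using this.tendsto s
  exact squeeze_zero (fun _ => norm_nonneg _) (fun t =>
    hG.norm_sub_le_of_sub_mem_orthogonal (sub_mem (hxK t) (hxK s)) (hx t) (hx s)) hlim

theorem inner_le_of_sub_eq_smul (hG : IsStronglyMonotoneOperator G) {e : E} (he : ‖e‖ = 1)
    {a b : E} {c : ℝ} (hab : G a - G b = c • e) (hpos : 0 < ⟪e, a - b⟫_ℝ) :
    ⟪e, a - b⟫_ℝ ≤ c := by
  have hmono := hG a b
  rw [hab, real_inner_smul_left] at hmono
  have hcs := abs_real_inner_le_norm e (a - b)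
  rw [he, one_mul, abs_of_pos hpos] at hcs
  nlinarith [pow_le_pow_left₀ hpos.le hcs 2]

theorem surjective_of_orthogonal_span_singleton (hG : IsStronglyMonotoneOperator G)
    (hGc : Continuous G) {e : E} (he : ‖e‖ = 1)
    (hK : ∀ H : (ℝ ∙ e)ᗮ → (ℝ ∙ e)ᗮ, Continuous H → IsStronglyMonotoneOperator H →
      Function.Surjective H) :
    Function.Surjective G := by
  intro y
  choose x hx using fun t : ℝ => hG.exists_sub_mem_orthogonal hGc _ hK (t • e) y
  set ξ : ℝ → E := fun t => x t + t • e
  set φ : ℝ → ℝ := fun t => ⟪e, G (ξ t) - y⟫_ℝ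
  have hξ : ∀ t, G (ξ t) - y = φ t • e := by
    intro t
    have := hx t
    rw [Submodule.orthogonal_orthogonal] at this
    obtain ⟨c, hc⟩ := Submodule.mem_span_singleton.mp this
    change c • e = G (ξ t) - y at hc
    simp only [φ, ← hc, real_inner_smul_right, real_inner_self_eq_norm_sq, he, one_pow, mul_one]
  have hxc : Continuous fun t => (x t : E) :=
    hG.continuous_of_sub_mem_orthogonal hGc (v := fun t => t • e) (by fun_prop)
      (fun t => (x t).2) hx
  have hφ : ∀ s t, s ≤ t → φ s + (t - s) ≤ φ t := by
    intro s t hst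
    rcases hst.eq_or_lt with rfl | hlt
    · simp
    have hdiff : G (ξ t) - G (ξ s) = (φ t - φ s) • e := by
      rw [sub_smul, ← hξ t, ← hξ s, sub_sub_sub_cancel_right]
    have hproj : ⟪e, ξ t - ξ s⟫_ℝ = t - s := by
      have : ⟪e, (x t : E) - x s⟫_ℝ = 0 :=
        Submodule.inner_right_of_mem_orthogonal (Submodule.mem_span_singleton_self e)
          (sub_mem (x t).2 (x s).2)
      simp only [ξ, add_sub_add_comm, inner_add_right, this, ← sub_smul, real_inner_smul_right, real_inner_self_eq_norm_sq, he]
      ring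
    linarith [hG.inner_le_of_sub_eq_smul he hdiff (hproj ▸ sub_pos.mpr hlt), hproj]
  obtain ⟨t, ht⟩ := exists_eq_zero_of_forall_add_sub_le (by fun_prop) hφ
  exact ⟨ξ t, by rw [← sub_eq_zero, hξ t, ht, zero_smul]⟩

theorem surjective_of_finiteDimensional [FiniteDimensional ℝ E]
    (hG : IsStronglyMonotoneOperator G) (hGc : Continuous G) : Function.Surjective G := by
  induction hn : Module.finrank ℝ E generalizing E with
  | zero =>
    have : Subsingleton E := Module.finrank_zero_iff.mp hn
    exact fun y => ⟨y, Subsingleton.elim _ _⟩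
  | succ n ih =>
    have : Fact (Module.finrank ℝ E = n + 1) := ⟨hn⟩
    have : Nontrivial E := Module.nontrivial_of_finrank_eq_succ hn
    obtain ⟨v, hv⟩ := exists_ne (0 : E)
    have he := norm_smul_inv_norm (𝕜 := ℝ) hv
    refine hG.surjective_of_orthogonal_span_singleton hGc he fun H hHc hH =>
      ih hH hHc (Submodule.finrank_orthogonal_span_singleton ?_)
    exact norm_ne_zero_iff.mp (he ▸ one_ne_zero)

theorem norm_le_of_inner_sub_eq_zero (hG : IsStronglyMonotoneOperator G) {x y : E}
    (h : ⟪G x - y, x⟫_ℝ = 0) : ‖x‖ ≤ ‖y - G 0‖ := by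
  have hx := hG x 0
  rw [sub_zero, show G x - G 0 = (G x - y) + (y - G 0) by abel, inner_add_left, h,
    zero_add] at hx
  nlinarith [real_inner_le_norm (y - G 0) x, norm_nonneg x, norm_nonneg (y - G 0)]

theorem surjective [CompleteSpace E] (hG : IsStronglyMonotoneOperator G) (hGc : Continuous G) :
    Function.Surjective G := by
  intro y
  choose x hx using fun S : Finset E => hG.exists_sub_mem_orthogonal hGc (Submodule.span ℝ S)
    (fun H hHc hH => hH.surjective_of_finiteDimensional hHc) 0 y
  simp only [add_zero] at hx
  have hxy : ∀ (S : Finset E), ∀ z ∈ Submodule.span ℝ (S : Set E),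
      ⟪G (x S), z⟫_ℝ = ⟪y, z⟫_ℝ := by
    intro S z hz
    rw [← sub_eq_zero, ← inner_sub_left]
    exact Submodule.inner_left_of_mem_orthogonal hz (hx S)
  let U : Ultrafilter (Finset E) := .of atTop
  obtain ⟨x₀, hx₀⟩ := exists_tendsto_inner_of_norm_le U (u := fun S => (x S : E)) fun S =>
    hG.norm_le_of_inner_sub_eq_zero (Submodule.inner_left_of_mem_orthogonal (x S).2 (hx S))
  refine ⟨x₀, hG.isMonotoneOperator.eq_of_tendsto hGc hx₀ (fun z => ?_) ?_⟩
  · refine tendsto_const_nhds.congr' (Eventually.filter_mono (Ultrafilter.of_le atTop) ?_)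
    filter_upwards [eventually_ge_atTop {z}] with S hS
    exact (hxy S z (Submodule.subset_span (hS (Finset.mem_singleton_self z)))).symm
  · simp only [hxy _ _ (x _).2]
    simpa only [real_inner_comm y] using hx₀ y

end IsStronglyMonotoneOperator

theorem IsMonotoneOperator.isStronglyMonotoneOperator_smul_add_id {F : E → E}
    (hF : IsMonotoneOperator F) {c : ℝ} (hc : 0 ≤ c) :
    IsStronglyMonotoneOperator fun x => c • F x + x := by
  intro a b
  rw [show c • F a + a - (c • F b + b) = c • (F a - F b) + (a - b) by rw [smul_sub]; abel,
    inner_add_left, real_inner_smul_left, real_inner_self_eq_norm_sq]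
  nlinarith [hF a b]

theorem IsCoerciveOperator.exists_norm_le {F : E → E} (hF : IsCoerciveOperator F) (M : ℝ) :
    ∃ C, ∀ x, ⟪F x, x⟫_ℝ ≤ M * ‖x‖ → ‖x‖ ≤ C := by
  obtain ⟨R, hR⟩ := hF (M + 1)
  refine ⟨max R 0, fun x hx => ?_⟩
  by_contra! hlt
  have hpos : 0 < ‖x‖ := (le_max_right R 0).trans_lt hlt
  have := hR x ((le_max_left R 0).trans hlt.le)
  rw [le_div_iff₀ hpos] at this
  linarith

theorem IsMonotoneOperator.surjective_of_coercive [CompleteSpace E] {F : E → E}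
    (hF : IsMonotoneOperator F) (hFc : Continuous F)
    (hcoer : IsCoerciveOperator F) : Function.Surjective F := by
  intro y
  have hreg : ∀ n : ℕ, ∃ x, F x = y - ((n : ℝ) + 1)⁻¹ • x := by
    intro n
    have hc : (0 : ℝ) < n + 1 := by positivity
    obtain ⟨x, hx⟩ := (hF.isStronglyMonotoneOperator_smul_add_id hc.le).surjective
      (by fun_prop) (((n : ℝ) + 1) • y)
    refine ⟨x, smul_right_injective E hc.ne' ?_⟩
    simp only at hx ⊢
    rw [smul_sub, smul_inv_smul₀ hc.ne', ← hx]
    abel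
  choose x hx using hreg
  obtain ⟨C, hC⟩ := hcoer.exists_norm_le ‖y‖
  have hbdd : ∀ n, ‖x n‖ ≤ C := fun n => hC _ <| by
    rw [hx n, inner_sub_left, real_inner_smul_left, real_inner_self_eq_norm_sq]
    have : 0 ≤ ((n : ℝ) + 1)⁻¹ * ‖x n‖ ^ 2 := by positivity
    linarith [real_inner_le_norm y (x n)]
  let U : Ultrafilter ℕ := .of atTop
  have hε : Tendsto (fun n : ℕ => ((n : ℝ) + 1)⁻¹) U (𝓝 0) := by
    simpa only [one_div] using
      (tendsto_one_div_add_atTop_nhds_zero_nat (𝕜 := ℝ)).mono_left (Ultrafilter.of_le atTop)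
  obtain ⟨x₀, hx₀⟩ := exists_tendsto_inner_of_norm_le U hbdd
  refine ⟨x₀, hF.eq_of_tendsto hFc hx₀ (fun z => ?_) ?_⟩
  · simp only [hx, inner_sub_left, real_inner_smul_left]
    simpa using tendsto_const_nhds.sub (hε.mul (hx₀ z))
  · simp only [hx, inner_sub_left, real_inner_smul_left]
    have hsq : IsBoundedUnder (· ≤ ·) U (fun n => ‖⟪x n, x n⟫_ℝ‖) :=
      isBoundedUnder_of ⟨C ^ 2, fun n => by
        rw [real_inner_self_eq_norm_sq, norm_pow, norm_norm]
        exact pow_le_pow_left₀ (norm_nonneg _) (hbdd n) 2⟩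
    simpa [real_inner_comm y] using (hx₀ y).sub (hε.zero_mul_isBoundedUnder_le hsq)

end

theorem browder_minty_general {X : Type*} [NormedAddCommGroup X] [InnerProductSpace ℝ X]
    [CompleteSpace X] (T : X → StrongDual ℝ X)
    (hcont : Continuous T)
    (hmono : ∀ x y : X, x ≠ y → 0 < (T x - T y) (x - y))
    (hcoer : ∀ M : ℝ, ∃ R : ℝ, ∀ x : X, R ≤ ‖x‖ → M ≤ T x x / ‖x‖) :
    ∀ f : StrongDual ℝ X, ∃! x : X, T x = f := by
  let F : X → X := fun x => (toDual ℝ X).symm (T x)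
  have hTF : ∀ x z, T x z = ⟪F x, z⟫_ℝ := fun x z => toDual_symm_apply.symm
  have hFm : IsMonotoneOperator F := by
    intro a b
    rcases eq_or_ne a b with rfl | hab
    · simp
    · simpa only [sub_apply, hTF, inner_sub_left] using (hmono a b hab).le
  have hsurj := hFm.surjective_of_coercive ((toDual ℝ X).symm.continuous.comp hcont)
    fun M => by simpa only [hTF] using hcoer M
  intro f
  obtain ⟨x, hx⟩ := hsurj ((toDual ℝ X).symm f)
  refine ⟨x, (toDual ℝ X).symm.injective hx, fun z hz => by_contra fun hne => ?_⟩
  simpa [hz, (toDual ℝ X).symm.injective hx] using hmono z x hne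

/-- Browder–Minty theorem on a real Hilbert space `X`: if `T : X → X*` is bounded
(maps bounded sets to bounded sets), continuous, strictly monotone and coercive,
then for every `f ∈ X*` there is a unique `x ∈ X` with `T x = f`.
(This is the abstract result yielding unique solvability of the semi-implicit
Euler step of the LLBar scheme for any time step `k > 0`.) -/
theorem browder_minty {X : Type*} [NormedAddCommGroup X] [InnerProductSpace ℝ X]
    [CompleteSpace X] (T : X → StrongDual ℝ X)
    (hbdd : ∀ s : Set X, Bornology.IsBounded s → Bornology.IsBounded (T '' s))
    (hcont : Continuous T)
    (hmono : ∀ x y : X, x ≠ y → 0 < (T x - T y) (x - y))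
    (hcoer : ∀ M : ℝ, ∃ R : ℝ, ∀ x : X, R ≤ ‖x‖ → M ≤ T x x / ‖x‖) :
    ∀ f : StrongDual ℝ X, ∃! x : X, T x = f :=
  browder_minty_general T hcont hmono hcoer
end

section
/- In the Crank–Nicolson finite element scheme for the LLBar system, with ψ(x,y) := ½(|x|²+|y|²)(x+y)/2, the discrete energy identity holds: (1/2)(‖∇u_h^{n+1}‖² − ‖∇u_h^n‖²) + (κ/4)(‖u_h^{n+1}‖⁴_{L⁴} − ‖u_h^n‖⁴_{L⁴}) − (κμ/2)(‖u_h^{n+1}‖² − ‖u_h^n‖²) + (β/2)(‖e·u_h^{n+1}‖² − ‖e·u_h^n‖²) + kλ_r‖H_h^{n+1/2}‖² + kλ_e‖∇H_h^{n+1/2}‖² = 0. Consequently the corresponding discrete energy is exactly conservative up to the dissipation terms, and E(u_h^{n+1}) ≤ E(u_h^n) for any k > 0. -/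
open MeasureTheory
open scoped RealInnerProductSpace

/-- The cross product on `ℝ³ = EuclideanSpace ℝ (Fin 3)`. -/
noncomputable def cross3 (a b : EuclideanSpace ℝ (Fin 3)) : EuclideanSpace ℝ (Fin 3) :=
  (WithLp.equiv 2 (Fin 3 → ℝ)).symm
    (crossProduct ((WithLp.equiv 2 (Fin 3 → ℝ)) a) ((WithLp.equiv 2 (Fin 3 → ℝ)) b))

/-- The Crank–Nicolson discretization `ψ(x,y) = ½(|x|²+|y|²)·((x+y)/2)` of `|u|²u`. -/
noncomputable def cnCubic (x y : EuclideanSpace ℝ (Fin 3)) : EuclideanSpace ℝ (Fin 3) :=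
  ((1 / 2 : ℝ) * (‖x‖ ^ 2 + ‖y‖ ^ 2)) • ((1 / 2 : ℝ) • (x + y))

/-- The micromagnetic energy
`E(u) = ½‖∇u‖² + (κ/4)‖u‖⁴_{L⁴} − (κμ/2)‖u‖²_{L²} + (β/2)‖e·u‖²_{L²}`,
with the gradient `∇u` supplied as data `g` valued in an inner product space `F`. -/
noncomputable def llbarEnergy' {α : Type*} [MeasurableSpace α]
    {F : Type*} [NormedAddCommGroup F] [InnerProductSpace ℝ F]
    (μm : Measure α) (κ μ0 β : ℝ) (e : EuclideanSpace ℝ (Fin 3))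
    (g : α → F) (u : α → EuclideanSpace ℝ (Fin 3)) : ℝ :=
  (1 / 2) * ∫ x, ‖g x‖ ^ 2 ∂μm + (κ / 4) * ∫ x, ‖u x‖ ^ 4 ∂μm -
    (κ * μ0 / 2) * ∫ x, ‖u x‖ ^ 2 ∂μm + (β / 2) * ∫ x, (⟪e, u x⟫) ^ 2 ∂μm

/-!
Test the first scheme equation with `χ = H_h^{n+1/2}` and the second with
`φ = (u_h^{n+1} − u_h^n)/k`: the left-hand sides agree, the gyroscopic term vanishes since
`(w × H)·H = 0`, and every term on the right of the second equation is pointwise a difference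
quotient, `(a+b)/2 · (b−a)/k = (|b|² − |a|²)/(2k)` and `ψ(a,b) · (b−a)/k = (|b|⁴ − |a|⁴)/(4k)`.
Integrating and multiplying by `k` gives the identity, and the dissipation terms
`kλ_r‖H‖² + kλ_e‖∇H‖²` are nonnegative.
-/

theorem inner_cross3_self_right (a b : EuclideanSpace ℝ (Fin 3)) : ⟪cross3 a b, b⟫ = 0 := by
  rw [EuclideanSpace.inner_eq_star_dotProduct, star_trivial]
  exact dot_cross_self _ _

section Pointwise

variable {E : Type*} [NormedAddCommGroup E] [InnerProductSpace ℝ E]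

theorem inner_half_add_smul_sub (k : ℝ) (a b : E) :
    ⟪(1 / 2 : ℝ) • (b + a), k⁻¹ • (b - a)⟫ = (2 * k)⁻¹ * (‖b‖ ^ 2 - ‖a‖ ^ 2) := by
  rw [real_inner_smul_left, real_inner_smul_right, inner_add_left, inner_sub_right,
    inner_sub_right, real_inner_self_eq_norm_sq, real_inner_self_eq_norm_sq, real_inner_comm a b]
  ring

theorem inner_half_add_mul_inner_smul_sub (k : ℝ) (e a b : E) :
    ⟪e, (1 / 2 : ℝ) • (b + a)⟫ * ⟪e, k⁻¹ • (b - a)⟫ =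
      (2 * k)⁻¹ * (⟪e, b⟫ ^ 2 - ⟪e, a⟫ ^ 2) := by
  rw [real_inner_smul_right, real_inner_smul_right, inner_add_right, inner_sub_right]
  ring

end Pointwise

theorem inner_cnCubic_smul_sub (k : ℝ) (a b : EuclideanSpace ℝ (Fin 3)) :
    ⟪cnCubic a b, k⁻¹ • (b - a)⟫ = (4 * k)⁻¹ * (‖b‖ ^ 4 - ‖a‖ ^ 4) := by
  rw [cnCubic, real_inner_smul_left, add_comm a b, inner_half_add_smul_sub]
  ring

section Integrals

variable {α : Type*} [MeasurableSpace α] {μ : Measure α}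

theorem integral_eq_mul_integral_sub {f p q : α → ℝ} (c : ℝ) (hp : Integrable p μ)
    (hq : Integrable q μ) (h : ∀ x, f x = c * (p x - q x)) :
    ∫ x, f x ∂μ = c * (∫ x, p x ∂μ - ∫ x, q x ∂μ) := by
  simp_rw [h]
  rw [integral_const_mul, integral_sub hp hq]

variable [IsFiniteMeasure μ] {E : Type*} [NormedAddCommGroup E] {f : α → E} {M : ℝ}

theorem integrable_norm_pow_of_bound (hf : AEStronglyMeasurable f μ) (hM : ∀ x, ‖f x‖ ≤ M)
    (n : ℕ) : Integrable (fun x => ‖f x‖ ^ n) μ :=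
  .of_bound (hf.norm.pow n) (M ^ n) <| ae_of_all _ fun x => by
    simpa using pow_le_pow_left₀ (norm_nonneg _) (hM x) n

theorem integrable_inner_sq_of_bound [InnerProductSpace ℝ E] (e : E)
    (hf : AEStronglyMeasurable f μ) (hM : ∀ x, ‖f x‖ ≤ M) :
    Integrable (fun x => ⟪e, f x⟫ ^ 2) μ := by
  have hbound (x : α) : ‖⟪e, f x⟫‖ ≤ ‖e‖ * M :=
    (norm_inner_le_norm e (f x)).trans (mul_le_mul_of_nonneg_left (hM x) (norm_nonneg e))
  simpa using integrable_norm_pow_of_bound hf.const_inner hbound 2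

end Integrals

/-- Here `u0 = u_h^n`, `u1 = u_h^{n+1}`, `Hn = H_h^{n+1/2}`, `uhat = û_h^{n−1/2}`, and `g0, g1, gH`
are the gradients of `u0, u1, Hn`. -/
theorem crank_nicolson_energy_identity_general
    {α : Type*} [MeasurableSpace α] (μm : Measure α) [IsFiniteMeasure μm]
    {F : Type*} [NormedAddCommGroup F] [InnerProductSpace ℝ F]
    (u0 u1 uhat Hn : α → EuclideanSpace ℝ (Fin 3)) (g0 g1 gH : α → F)
    (e : EuclideanSpace ℝ (Fin 3))
    (k lr le' κ μ0 β γ : ℝ)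
    (hk : 0 < k) (hlr : 0 < lr) (hle : 0 < le')
    -- regularity: measurability and boundedness of all fields
    (hmu0 : AEStronglyMeasurable u0 μm) (hmu1 : AEStronglyMeasurable u1 μm)
    (hmg0 : AEStronglyMeasurable g0 μm) (hmg1 : AEStronglyMeasurable g1 μm)
    (hbd : ∃ M, ∀ x, ‖u0 x‖ ≤ M ∧ ‖u1 x‖ ≤ M ∧ ‖uhat x‖ ≤ M ∧ ‖Hn x‖ ≤ M ∧
      ‖g0 x‖ ≤ M ∧ ‖g1 x‖ ≤ M ∧ ‖gH x‖ ≤ M)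
    -- first scheme equation tested with χ = H_h^{n+1/2}
    (hsch1 : ∫ x, ⟪k⁻¹ • (u1 x - u0 x), Hn x⟫ ∂μm =
      lr * ∫ x, ‖Hn x‖ ^ 2 ∂μm + le' * ∫ x, ‖gH x‖ ^ 2 ∂μm -
        γ * ∫ x, ⟪cross3 (uhat x) (Hn x), Hn x⟫ ∂μm)
    -- second scheme equation tested with φ = δu_h^{n+1/2}
    (hsch2 : ∫ x, ⟪Hn x, k⁻¹ • (u1 x - u0 x)⟫ ∂μm =
      -(∫ x, ⟪(1 / 2 : ℝ) • (g1 x + g0 x), k⁻¹ • (g1 x - g0 x)⟫ ∂μm) +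
        κ * μ0 * ∫ x, ⟪(1 / 2 : ℝ) • (u1 x + u0 x), k⁻¹ • (u1 x - u0 x)⟫ ∂μm -
        κ * ∫ x, ⟪cnCubic (u0 x) (u1 x), k⁻¹ • (u1 x - u0 x)⟫ ∂μm -
        β * ∫ x, ⟪e, (1 / 2 : ℝ) • (u1 x + u0 x)⟫ * ⟪e, k⁻¹ • (u1 x - u0 x)⟫ ∂μm) :
    (1 / 2) * ((∫ x, ‖g1 x‖ ^ 2 ∂μm) - ∫ x, ‖g0 x‖ ^ 2 ∂μm) +
      (κ / 4) * ((∫ x, ‖u1 x‖ ^ 4 ∂μm) - ∫ x, ‖u0 x‖ ^ 4 ∂μm) -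
      (κ * μ0 / 2) * ((∫ x, ‖u1 x‖ ^ 2 ∂μm) - ∫ x, ‖u0 x‖ ^ 2 ∂μm) +
      (β / 2) * ((∫ x, (⟪e, u1 x⟫) ^ 2 ∂μm) - ∫ x, (⟪e, u0 x⟫) ^ 2 ∂μm) +
      k * lr * ∫ x, ‖Hn x‖ ^ 2 ∂μm + k * le' * ∫ x, ‖gH x‖ ^ 2 ∂μm = 0 ∧
    llbarEnergy' μm κ μ0 β e g1 u1 ≤ llbarEnergy' μm κ μ0 β e g0 u0 := by
  obtain ⟨M, hM⟩ := hbd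
  have hu0 (x : α) := (hM x).1
  have hu1 (x : α) := (hM x).2.1
  have hg0 (x : α) := (hM x).2.2.2.2.1
  have hg1 (x : α) := (hM x).2.2.2.2.2.1
  rw [integral_eq_mul_integral_sub _ (integrable_norm_pow_of_bound hmg1 hg1 2)
      (integrable_norm_pow_of_bound hmg0 hg0 2) fun x => inner_half_add_smul_sub k _ _,
    integral_eq_mul_integral_sub _ (integrable_norm_pow_of_bound hmu1 hu1 2)
      (integrable_norm_pow_of_bound hmu0 hu0 2) fun x => inner_half_add_smul_sub k _ _,
    integral_eq_mul_integral_sub _ (integrable_norm_pow_of_bound hmu1 hu1 4)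
      (integrable_norm_pow_of_bound hmu0 hu0 4) fun x => inner_cnCubic_smul_sub k _ _,
    integral_eq_mul_integral_sub _ (integrable_inner_sq_of_bound e hmu1 hu1)
      (integrable_inner_sq_of_bound e hmu0 hu0)
      fun x => inner_half_add_mul_inner_smul_sub k e _ _] at hsch2
  simp only [inner_cross3_self_right, integral_zero, mul_zero, sub_zero] at hsch1
  simp only [real_inner_comm _ (Hn _)] at hsch2
  have hscheme := hsch1.symm.trans hsch2
  field_simp at hscheme
  have hdissipation : 0 ≤ k * lr * ∫ x, ‖Hn x‖ ^ 2 ∂μm + k * le' * ∫ x, ‖gH x‖ ^ 2 ∂μm := by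
    positivity
  refine ⟨by linear_combination hscheme / 8, ?_⟩
  unfold llbarEnergy'
  linarith

/-- Discrete energy identity for the Crank–Nicolson finite element scheme for the LLBar
system.  Here `u0 = u_h^n`, `u1 = u_h^{n+1}`, `Hn = H_h^{n+1/2}`, `uhat = û_h^{n−1/2}`,
with gradients `g0, g1, gH`; the scheme equations tested with `χ = H_h^{n+1/2}` and
`φ = δu_h^{n+1/2} = (u1 − u0)/k` are assumed.  Then
`½(‖∇u1‖²−‖∇u0‖²) + (κ/4)(‖u1‖⁴_{L⁴}−‖u0‖⁴_{L⁴}) − (κμ/2)(‖u1‖²−‖u0‖²)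
 + (β/2)(‖e·u1‖²−‖e·u0‖²) + kλ_r‖H^{n+1/2}‖² + kλ_e‖∇H^{n+1/2}‖² = 0`,
and consequently `E(u_h^{n+1}) ≤ E(u_h^n)` for any `k > 0`. -/
theorem crank_nicolson_energy_identity
    {α : Type*} [MeasurableSpace α] (μm : Measure α) [IsFiniteMeasure μm]
    {F : Type*} [NormedAddCommGroup F] [InnerProductSpace ℝ F]
    (u0 u1 uhat Hn : α → EuclideanSpace ℝ (Fin 3)) (g0 g1 gH : α → F)
    (e : EuclideanSpace ℝ (Fin 3)) (he : ‖e‖ = 1)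
    (k lr le' κ μ0 β γ : ℝ)
    (hk : 0 < k) (hlr : 0 < lr) (hle : 0 < le') (hκ : 0 < κ)
    -- regularity: measurability and boundedness of all fields
    (hmu0 : AEStronglyMeasurable u0 μm) (hmu1 : AEStronglyMeasurable u1 μm)
    (hmuh : AEStronglyMeasurable uhat μm) (hmH : AEStronglyMeasurable Hn μm)
    (hmg0 : AEStronglyMeasurable g0 μm) (hmg1 : AEStronglyMeasurable g1 μm)
    (hmgH : AEStronglyMeasurable gH μm)
    (hbd : ∃ M, ∀ x, ‖u0 x‖ ≤ M ∧ ‖u1 x‖ ≤ M ∧ ‖uhat x‖ ≤ M ∧ ‖Hn x‖ ≤ M ∧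
      ‖g0 x‖ ≤ M ∧ ‖g1 x‖ ≤ M ∧ ‖gH x‖ ≤ M)
    -- first scheme equation tested with χ = H_h^{n+1/2}
    (hsch1 : ∫ x, ⟪k⁻¹ • (u1 x - u0 x), Hn x⟫ ∂μm =
      lr * ∫ x, ‖Hn x‖ ^ 2 ∂μm + le' * ∫ x, ‖gH x‖ ^ 2 ∂μm -
        γ * ∫ x, ⟪cross3 (uhat x) (Hn x), Hn x⟫ ∂μm)
    -- second scheme equation tested with φ = δu_h^{n+1/2}
    (hsch2 : ∫ x, ⟪Hn x, k⁻¹ • (u1 x - u0 x)⟫ ∂μm =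
      -(∫ x, ⟪(1 / 2 : ℝ) • (g1 x + g0 x), k⁻¹ • (g1 x - g0 x)⟫ ∂μm) +
        κ * μ0 * ∫ x, ⟪(1 / 2 : ℝ) • (u1 x + u0 x), k⁻¹ • (u1 x - u0 x)⟫ ∂μm -
        κ * ∫ x, ⟪cnCubic (u0 x) (u1 x), k⁻¹ • (u1 x - u0 x)⟫ ∂μm -
        β * ∫ x, ⟪e, (1 / 2 : ℝ) • (u1 x + u0 x)⟫ * ⟪e, k⁻¹ • (u1 x - u0 x)⟫ ∂μm) :
    (1 / 2) * ((∫ x, ‖g1 x‖ ^ 2 ∂μm) - ∫ x, ‖g0 x‖ ^ 2 ∂μm) +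
      (κ / 4) * ((∫ x, ‖u1 x‖ ^ 4 ∂μm) - ∫ x, ‖u0 x‖ ^ 4 ∂μm) -
      (κ * μ0 / 2) * ((∫ x, ‖u1 x‖ ^ 2 ∂μm) - ∫ x, ‖u0 x‖ ^ 2 ∂μm) +
      (β / 2) * ((∫ x, (⟪e, u1 x⟫) ^ 2 ∂μm) - ∫ x, (⟪e, u0 x⟫) ^ 2 ∂μm) +
      k * lr * ∫ x, ‖Hn x‖ ^ 2 ∂μm + k * le' * ∫ x, ‖gH x‖ ^ 2 ∂μm = 0 ∧
    llbarEnergy' μm κ μ0 β e g1 u1 ≤ llbarEnergy' μm κ μ0 β e g0 u0 :=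
  crank_nicolson_energy_identity_general μm u0 u1 uhat Hn g0 g1 gH e k lr le' κ μ0 β γ hk hlr hle
    hmu0 hmu1 hmg0 hmg1 hbd hsch1 hsch2
end
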